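/- With β₃⁺ = (2 l_a)/(3 c T₀)·(T⁺ − T₀) and T⁺ given by (C + 2 l_a²/(3 c T₀)) T⁺ = 𝒯 + C T⁻ + 2 l_a²/(3c), the admissibility conditions 0 ≤ β₃⁺ ≤ 1 hold if and only if 0 ≤ 𝒯 + C(T⁻ − T₀) ≤ (3 c C T₀ + 2 l_a²)/(2 l_a). -/

import Mathlib

/-!
Eliminating `T⁺` from the energy balance gives `T⁺ − T₀ = 3cT₀ W / (3cCT₀ + 2l_a²)` with
`W = 𝒯 + C(T⁻ − T₀)`, so `β₃⁺ = W / D` with `D = (3cCT₀ + 2l_a²)/(2l_a) > 0`; and for `D > 0`,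
`W / D` lies in `[0, 1]` exactly when `W` lies in `[0, D]`.
-/

theorem div_mem_unitInterval_iff {𝕜 : Type*} [Field 𝕜] [LinearOrder 𝕜] [IsStrictOrderedRing 𝕜]
    {a b : 𝕜} (hb : 0 < b) : (0 ≤ a / b ∧ a / b ≤ 1) ↔ (0 ≤ a ∧ a ≤ b) := by
  rw [le_div_iff₀ hb, zero_mul, div_le_one hb]

theorem temperature_jump_eq {c C la T0 Tm 𝒯 Tp : ℝ} (hc : c ≠ 0) (hT0 : T0 ≠ 0)
    (hD : 3 * c * C * T0 + 2 * la ^ 2 ≠ 0)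
    (hTp : (C + 2 * la ^ 2 / (3 * c * T0)) * Tp = 𝒯 + C * Tm + 2 * la ^ 2 / (3 * c)) :
    Tp - T0 = 3 * c * T0 * (𝒯 + C * (Tm - T0)) / (3 * c * C * T0 + 2 * la ^ 2) := by
  field_simp at hTp
  rw [eq_div_iff hD]
  linear_combination hTp

/-- Admissibility `0 ≤ β₃⁺ ≤ 1` of the closed-form solution holds iff the dissipated
work satisfies `0 ≤ 𝒯 + C(T⁻ − T₀) ≤ (3cCT₀ + 2l_a²)/(2l_a)`. -/
theorem admissibility_iff (c C la T0 Tm 𝒯 β3 Tp : ℝ)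
    (hc : 0 < c) (hC : 0 < C) (hla : 0 < la) (hT0 : 0 < T0)
    (hβ3 : β3 = 2 * la / (3 * c * T0) * (Tp - T0))
    (hTp : (C + 2 * la ^ 2 / (3 * c * T0)) * Tp = 𝒯 + C * Tm + 2 * la ^ 2 / (3 * c)) :
    (0 ≤ β3 ∧ β3 ≤ 1) ↔
      (0 ≤ 𝒯 + C * (Tm - T0) ∧
        𝒯 + C * (Tm - T0) ≤ (3 * c * C * T0 + 2 * la ^ 2) / (2 * la)) := by
  have hD : 0 < 3 * c * C * T0 + 2 * la ^ 2 := by positivity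
  have hβ3_eq : β3 = (𝒯 + C * (Tm - T0)) / ((3 * c * C * T0 + 2 * la ^ 2) / (2 * la)) := by
    rw [hβ3, temperature_jump_eq hc.ne' hT0.ne' hD.ne' hTp]
    field_simp
  rw [hβ3_eq]
  exact div_mem_unitInterval_iff (by positivity)
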